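/- arXiv:2407.19362 — 4 statements merged into one kernel-verified Lean document; each statement's English description precedes it below -/
import Mathlib

section
/- The cycle of length 5 is not odd 4-colorable; that is, there is no proper 4-coloring of C5 such that every vertex has some color appearing an odd number of times among its neighbors. -/
/-!
A vertex with exactly two neighbours can only see an odd number of some colour if its two
neighbours have different colours. In C5 every two distinct vertices are adjacent or are the two
neighbours of a common vertex, so an odd colouring of C5 is injective and needs five colours.
-/

open SimpleGraph

/-- A proper 4-coloring: adjacent vertices receive distinct colors. -/
def IsProper4 {V : Type*} (G : SimpleGraph V) (φ : V → Fin 4) : Prop :=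
  ∀ ⦃u w : V⦄, G.Adj u w → φ u ≠ φ w

/-- The number of neighbors of `v` colored `i`. -/
noncomputable def nbrCount {V : Type*} (G : SimpleGraph V) (φ : V → Fin 4) (v : V) (i : Fin 4) : ℕ :=
  {u | u ∈ G.neighborSet v ∧ φ u = i}.ncard

/-- `v` satisfies the odd condition: some color appears an odd number of times in `N(v)`. -/
def OddAt {V : Type*} (G : SimpleGraph V) (φ : V → Fin 4) (v : V) : Prop :=
  ∃ i : Fin 4, Odd (nbrCount G φ v i)

/-- `v` satisfies the even condition: some color `i ≠ φ v` appears an even number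
of times (possibly zero) in `N(v)`. -/
def EvenAt {V : Type*} (G : SimpleGraph V) (φ : V → Fin 4) (v : V) : Prop :=
  ∃ i : Fin 4, i ≠ φ v ∧ Even (nbrCount G φ v i)

/-- An odd 4-coloring: a proper 4-coloring in which every non-isolated vertex
satisfies the odd condition. -/
def IsOdd4Coloring {V : Type*} (G : SimpleGraph V) (φ : V → Fin 4) : Prop :=
  IsProper4 G φ ∧ ∀ v : V, (G.neighborSet v).Nonempty → OddAt G φ v

theorem OddAt.apply_ne_apply_of_neighborSet_eq_pair {V : Type*} {G : SimpleGraph V}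
    {φ : V → Fin 4} {v a b : V} (hab : a ≠ b) (hN : G.neighborSet v = {a, b})
    (h : OddAt G φ v) : φ a ≠ φ b := by
  intro hφ
  obtain ⟨i, hi⟩ := h
  have hcount : nbrCount G φ v i = if φ b = i then 2 else 0 := by
    rw [nbrCount, hN]
    split_ifs with hb
    · rw [← Set.ncard_pair hab]
      congr 1
      ext u
      simp only [Set.mem_ofPred_eq, Set.mem_insert_iff, Set.mem_singleton_iff, and_iff_left_iff_imp]
      rintro (rfl | rfl) <;> simp [hφ, hb]
    · convert Set.ncard_empty V
      ext u
      simp only [Set.mem_ofPred_eq, Set.mem_insert_iff, Set.mem_singleton_iff,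
        Set.mem_empty_iff_false, iff_false, not_and]
      rintro (rfl | rfl) <;> simpa [hφ] using hb
  rw [hcount] at hi
  split_ifs at hi <;> exact absurd hi (by decide)

theorem Fin.sub_one_ne_add_one {n : ℕ} (v : Fin (n + 3)) : v - 1 ≠ v + 1 := by
  have h2 : (1 + 1 : Fin (n + 3)) ≠ 0 := by
    rw [Ne, Fin.ext_iff, Fin.val_add, Fin.val_one, Fin.val_zero, Nat.mod_eq_of_lt (by omega)]
    omega
  simpa [sub_eq_iff_eq_add, add_assoc] using h2

theorem IsOdd4Coloring.apply_sub_one_ne_apply_add_one {n : ℕ} {φ : Fin (n + 3) → Fin 4}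
    (h : IsOdd4Coloring (cycleGraph (n + 3)) φ) (v : Fin (n + 3)) :
    φ (v - 1) ≠ φ (v + 1) := by
  have hN : (cycleGraph (n + 3)).neighborSet v = {v - 1, v + 1} := cycleGraph_neighborSet
  exact (h.2 v ⟨v + 1, by simp [hN]⟩).apply_ne_apply_of_neighborSet_eq_pair
    (Fin.sub_one_ne_add_one v) hN

theorem IsOdd4Coloring.injective_cycleGraph_five {φ : Fin 5 → Fin 4}
    (h : IsOdd4Coloring (cycleGraph 5) φ) : φ.Injective := by
  have adj_or_dist_two : ∀ u w : Fin 5, u ≠ w →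
      (cycleGraph 5).Adj u w ∨ w = u + 2 ∨ u = w + 2 := by decide
  have dist_two : ∀ u : Fin 5, φ u ≠ φ (u + 2) := fun u => by
    simpa [sub_add_cancel, add_assoc, one_add_one_eq_two] using
      h.apply_sub_one_ne_apply_add_one (n := 2) (u + 1)
  intro u w huw
  by_contra hne
  rcases adj_or_dist_two u w hne with hadj | rfl | rfl
  · exact h.1 hadj huw
  · exact dist_two u huw
  · exact dist_two w huw.symm

theorem c5_not_odd4colorable :
    ¬ ∃ φ : Fin 5 → Fin 4, IsOdd4Coloring (SimpleGraph.cycleGraph 5) φ := by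
  rintro ⟨φ, hφ⟩
  simpa using Fintype.card_le_of_injective φ hφ.injective_cycleGraph_five
end

section
/- Every cycle of length n ≥ 3 with n ≠ 5 admits an odd 4-coloring, i.e., a proper 4-coloring in which every vertex has some color appearing an odd number of times among its two neighbors. -/
/-!
If the two neighbours of a vertex receive different colours, each of these colours occurs exactly
once around it, so a proper colouring that is injective on every neighbourhood is odd. On a cycle
this asks for any three consecutive vertices to get distinct colours, and concatenating blocks
`0123` and `012` gives such a 4-colouring of every length `3a + 4b`, that is, of every `n ≥ 3`
except `5`.
-/

open SimpleGraph

section InjectiveOnNeighborhoods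

variable {V : Type*} {G : SimpleGraph V} {φ : V → Fin 4}

lemma nbrCount_eq_one_of_injOn {v u : V} (hinj : Set.InjOn φ (G.neighborSet v))
    (hu : u ∈ G.neighborSet v) : nbrCount G φ v (φ u) = 1 := by
  rw [nbrCount, Set.ncard_eq_one]
  exact ⟨u, Set.ext fun w => ⟨fun ⟨hw, h⟩ => hinj hw hu h, by rintro rfl; exact ⟨hu, rfl⟩⟩⟩

lemma oddAt_of_injOn {v : V} (hinj : Set.InjOn φ (G.neighborSet v))
    (hne : (G.neighborSet v).Nonempty) : OddAt G φ v :=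
  let ⟨u, hu⟩ := hne
  ⟨φ u, nbrCount_eq_one_of_injOn hinj hu ▸ odd_one⟩

lemma isOdd4Coloring_of_injOn_neighborSet (hφ : IsProper4 G φ)
    (hinj : ∀ v, Set.InjOn φ (G.neighborSet v)) : IsOdd4Coloring G φ :=
  ⟨hφ, fun v => oddAt_of_injOn (hinj v)⟩

end InjectiveOnNeighborhoods

open Fin.CommRing in
lemma isOdd4Coloring_cycleGraph {n : ℕ} {φ : Fin (n + 3) → Fin 4}
    (h₁ : ∀ v, φ v ≠ φ (v + 1)) (h₂ : ∀ v, φ v ≠ φ (v + 2)) :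
    IsOdd4Coloring (cycleGraph (n + 3)) φ := by
  refine isOdd4Coloring_of_injOn_neighborSet ?_ fun v => ?_
  · intro u w huw
    rcases cycleGraph_adj.mp huw with h | h <;> rw [sub_eq_iff_eq_add'] at h <;> subst h
    exacts [(h₁ w).symm, h₁ u]
  · rw [cycleGraph_neighborSet, Set.injOn_pair]
    have h := h₂ (v - 1)
    rw [show v - 1 + 2 = v + 1 by ring] at h
    exact fun h' => absurd h' h

/-- The block `0123` repeated `n % 3` times, followed by blocks `012` up to length `n`. -/
def cycleColoring (n i : ℕ) : ℕ :=
  if i < 4 * (n % 3) then i % 4 else (i - 4 * (n % 3)) % 3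

lemma cycleColoring_lt_four (n i : ℕ) : cycleColoring n i < 4 := by
  unfold cycleColoring; split_ifs <;> omega

lemma cycleColoring_ne_add {n i k : ℕ} (hn : 3 ≤ n) (hn5 : n ≠ 5) (hi : i < n)
    (hk₀ : 0 < k) (hk : k < 3) : cycleColoring n i ≠ cycleColoring n ((i + k) % n) := by
  have hwrap : (i + k) % n = if i + k < n then i + k else i + k - n := by
    split_ifs with h
    · exact Nat.mod_eq_of_lt h
    · rw [Nat.mod_eq_sub_mod (by omega), Nat.mod_eq_of_lt (by omega)]
  rw [hwrap]
  unfold cycleColoring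
  split_ifs <;> omega

theorem cycle_odd4colorable (n : ℕ) (hn : 3 ≤ n) (hn5 : n ≠ 5) :
    ∃ φ : Fin n → Fin 4, IsOdd4Coloring (SimpleGraph.cycleGraph n) φ := by
  obtain ⟨m, rfl⟩ : ∃ m, n = m + 3 := ⟨n - 3, by omega⟩
  let φ : Fin (m + 3) → Fin 4 := fun v => ⟨cycleColoring (m + 3) v, cycleColoring_lt_four _ _⟩
  have hφ (v k : Fin (m + 3)) (hk₀ : 0 < k.val) (hk : k.val < 3) : φ v ≠ φ (v + k) := by
    simpa only [φ, ne_eq, Fin.mk.injEq, Fin.val_add] using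
      cycleColoring_ne_add hn hn5 v.isLt hk₀ hk
  exact ⟨φ, isOdd4Coloring_cycleGraph (fun v => hφ v 1 (by simp) (by simp))
    (fun v => hφ v 2 (by rw [Fin.val_two]; omega) (by rw [Fin.val_two]; omega))⟩
end

section
/- The cycle of length 5 is not odd 4-colorable, but for each vertex v of C5 there is a proper 4-coloring φ of C5 such that every vertex u ≠ v satisfies the odd condition and v satisfies the even condition with respect to φ. -/
open SimpleGraph

/-!
A vertex with exactly two neighbours satisfies the odd condition iff its neighbours get different
colours, and always satisfies the even condition, since some colour misses the vertex and both
neighbours. In `C₅` any two distinct vertices are adjacent or are the two neighbours of a third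
vertex, so an odd colouring of `C₅` is injective, which is impossible with four colours. Giving the
neighbours of `v` the same colour and the remaining three vertices distinct colours yields the
almost-odd colouring.
-/

section DegreeTwo

variable {V : Type*} {G : SimpleGraph V} {φ : V → Fin 4} {v a b : V}

lemma nbrCount_eq_of_neighborSet_eq_pair (hab : a ≠ b) (hN : G.neighborSet v = {a, b})
    (i : Fin 4) :
    nbrCount G φ v i = (if φ a = i then 1 else 0) + (if φ b = i then 1 else 0) := by
  classical
  have hset : {u | u ∈ G.neighborSet v ∧ φ u = i} = ↑(({a, b} : Finset V).filter (φ · = i)) := by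
    ext u
    simp [hN]
  rw [nbrCount, hset, Set.ncard_coe_finset]
  by_cases ha : φ a = i <;> by_cases hb : φ b = i <;>
    simp [Finset.filter_insert, Finset.filter_singleton, ha, hb, hab]

lemma nbrCount_eq_zero_of_forall_ne {i : Fin 4} (h : ∀ u ∈ G.neighborSet v, φ u ≠ i) :
    nbrCount G φ v i = 0 := by
  have hempty : {u | u ∈ G.neighborSet v ∧ φ u = i} = ∅ :=
    Set.eq_empty_iff_forall_notMem.2 fun u hu => h u hu.1 hu.2
  rw [nbrCount, hempty, Set.ncard_empty]

lemma oddAt_iff_of_neighborSet_eq_pair (hab : a ≠ b) (hN : G.neighborSet v = {a, b}) :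
    OddAt G φ v ↔ φ a ≠ φ b := by
  simp only [OddAt, nbrCount_eq_of_neighborSet_eq_pair hab hN]
  constructor
  · rintro ⟨i, hi⟩ hφ
    rw [hφ] at hi
    split_ifs at hi <;> simp [Nat.odd_iff] at hi
  · intro h
    exact ⟨φ a, by simp [Ne.symm h]⟩

lemma evenAt_of_neighborSet_eq_pair (hN : G.neighborSet v = {a, b}) : EvenAt G φ v := by
  have hfree : ∀ x y z : Fin 4, ∃ i, i ≠ x ∧ i ≠ y ∧ i ≠ z := by decide
  obtain ⟨i, hv, ha, hb⟩ := hfree (φ v) (φ a) (φ b)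
  refine ⟨i, hv, ?_⟩
  rw [nbrCount_eq_zero_of_forall_ne]
  · exact Even.zero
  · rw [hN]
    rintro u (rfl | rfl) <;> exact Ne.symm ‹_›

end DegreeTwo

lemma cycleGraph_five_neighborSet (v : Fin 5) : (cycleGraph 5).neighborSet v = {v - 1, v + 1} :=
  cycleGraph_neighborSet (n := 3)

lemma oddAt_cycleGraph_five_iff {φ : Fin 5 → Fin 4} {v : Fin 5} :
    OddAt (cycleGraph 5) φ v ↔ φ (v - 1) ≠ φ (v + 1) :=
  oddAt_iff_of_neighborSet_eq_pair (by revert v; decide) (cycleGraph_five_neighborSet v)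

lemma cycleGraph_five_adj_or_eq_neighbors : ∀ a b : Fin 5, a ≠ b →
    (cycleGraph 5).Adj a b ∨ ∃ c, (a = c - 1 ∧ b = c + 1) ∨ (a = c + 1 ∧ b = c - 1) := by
  decide

lemma IsOdd4Coloring.injective_of_cycleGraph_five {φ : Fin 5 → Fin 4}
    (hφ : IsOdd4Coloring (cycleGraph 5) φ) : Function.Injective φ := by
  have hodd (c : Fin 5) : φ (c - 1) ≠ φ (c + 1) := by
    rw [← oddAt_cycleGraph_five_iff]
    exact hφ.2 c (by simp [cycleGraph_five_neighborSet])
  intro a b hab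
  by_contra hne
  rcases cycleGraph_five_adj_or_eq_neighbors a b hne with hadj | ⟨c, ⟨rfl, rfl⟩ | ⟨rfl, rfl⟩⟩
  · exact hφ.1 hadj hab
  · exact hodd c hab
  · exact hodd c hab.symm

lemma not_exists_isOdd4Coloring_cycleGraph_five :
    ¬ ∃ φ : Fin 5 → Fin 4, IsOdd4Coloring (cycleGraph 5) φ := by
  rintro ⟨φ, hφ⟩
  simpa using Fintype.card_le_of_injective φ hφ.injective_of_cycleGraph_five

def almostOddColoring (v u : Fin 5) : Fin 4 := ![0, 1, 2, 3, 1] (u - v)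

lemma isProper4_almostOddColoring (v : Fin 5) :
    IsProper4 (cycleGraph 5) (almostOddColoring v) := by
  revert v
  unfold IsProper4 almostOddColoring
  decide

lemma almostOddColoring_sub_one_ne_add_one :
    ∀ v u : Fin 5, u ≠ v → almostOddColoring v (u - 1) ≠ almostOddColoring v (u + 1) := by
  unfold almostOddColoring
  decide

theorem c5_not_odd4colorable_but_almost :
    (¬ ∃ φ : Fin 5 → Fin 4, IsOdd4Coloring (SimpleGraph.cycleGraph 5) φ) ∧
    ∀ v : Fin 5, ∃ φ : Fin 5 → Fin 4,
      IsProper4 (SimpleGraph.cycleGraph 5) φ ∧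
      (∀ u : Fin 5, u ≠ v → OddAt (SimpleGraph.cycleGraph 5) φ u) ∧
      EvenAt (SimpleGraph.cycleGraph 5) φ v := by
  refine ⟨not_exists_isOdd4Coloring_cycleGraph_five, fun v => ⟨almostOddColoring v,
    isProper4_almostOddColoring v, fun u hu => ?_,
    evenAt_of_neighborSet_eq_pair (cycleGraph_five_neighborSet v)⟩⟩
  exact oddAt_cycleGraph_five_iff.2 (almostOddColoring_sub_one_ne_add_one v u hu)
end

section
/- Let G be a connected graph with at least two blocks, all of whose blocks are isomorphic to C5. Let B = v1 v2 v3 v4 v5 be a leaf block of G whose unique cut vertex is v1, and let G' = G − {v2, v3, v4, v5}. If φ is an odd 4-coloring of G, then φ(v2) = φ(v5), and the restriction of φ to G' is an odd 4-coloring of G'. -/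
open SimpleGraph

/-- The induced subgraph on `S` is connected and has no cut vertex. -/
def NoCutVtx {V : Type*} (G : SimpleGraph V) (S : Set V) : Prop :=
  (G.induce S).Connected ∧
    ∀ v ∈ S, (S \ {v}).Nonempty → (G.induce (S \ {v})).Connected

/-- A block of `G`: a maximal vertex set inducing a connected subgraph
with no cut vertex. -/
def IsBlock {V : Type*} (G : SimpleGraph V) (S : Set V) : Prop :=
  NoCutVtx G S ∧ ∀ T : Set V, S ⊆ T → NoCutVtx G T → T = S

/-- The subgraph induced on `S` is isomorphic to the 5-cycle. -/
def IsC5Block {V : Type*} (G : SimpleGraph V) (S : Set V) : Prop :=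
  Nonempty ((G.induce S) ≃g SimpleGraph.cycleGraph 5)

section Auxiliary

variable {V : Type*} {G : SimpleGraph V}

lemma walk_in_set [DecidableEq V] {s : Set V} (h : (G.induce s).Connected)
    {a b : V} (ha : a ∈ s) (hb : b ∈ s) :
    ∃ p : G.Walk a b, p.IsPath ∧ ∀ x ∈ p.support, x ∈ s := by
  obtain ⟨p0⟩ := h.preconnected ⟨a, ha⟩ ⟨b, hb⟩
  let p1 : G.Walk a b := p0.map (SimpleGraph.Embedding.induce s).toHom
  refine ⟨p1.toPath, p1.toPath.2, fun x hx => ?_⟩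
  have hx' : x ∈ p1.support := Walk.support_toPath_subset p1 hx
  rw [show p1.support = p0.support.map _ from Walk.support_map _ _] at hx'
  obtain ⟨⟨y, hy⟩, _, rfl⟩ := List.mem_map.mp hx'
  exact hy

lemma eq_of_mem_takeUntil_dropUntil [DecidableEq V] {a b : V} {q : G.Walk a b} (hq : q.IsPath)
    {y : V} (hy : y ∈ q.support) {x : V}
    (h1 : x ∈ (q.takeUntil y hy).support) (h2 : x ∈ (q.dropUntil y hy).support) : x = y := by
  have hnd := hq.support_nodup
  rw [← q.take_spec hy, Walk.support_append, List.nodup_append] at hnd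
  rw [Walk.support_eq_cons (q.dropUntil y hy)] at h2
  rcases List.mem_cons.mp h2 with h2' | h2'
  · exact h2'
  · exact absurd rfl (hnd.2.2 x h1 x h2')

lemma fin5_sub_ne_add (i : Fin 5) : i - 1 ≠ i + 1 := by
  intro h
  have h2 : (0 : Fin 5) = 2 := by
    calc (0:Fin 5) = (i-1) - (i-1) := by open Fin.CommRing in ring
      _ = (i+1) - (i-1) := by rw [← h]
      _ = 2 := by open Fin.CommRing in ring
  exact absurd h2 (by decide)

lemma chord_free (v : Fin 5 → V) (hinj : Function.Injective v)
    (hadj : ∀ i : Fin 5, G.Adj (v i) (v (i + 1)))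
    (hC5 : Nonempty ((G.induce (Set.range v)) ≃g cycleGraph 5))
    (i : Fin 5) {w : V} (hwr : w ∈ Set.range v) (haw : G.Adj (v i) w) :
    w = v (i - 1) ∨ w = v (i + 1) := by
  by_contra hcon
  push_neg at hcon
  obtain ⟨hw1, hw2⟩ := hcon
  obtain ⟨e⟩ := hC5
  have hvi : v i ∈ Set.range v := ⟨i, rfl⟩
  have hmem1 : v (i-1) ∈ Set.range v := ⟨i-1, rfl⟩
  have hmem2 : v (i+1) ∈ Set.range v := ⟨i+1, rfl⟩
  have hadj1 : (G.induce (Set.range v)).Adj ⟨v i, hvi⟩ ⟨v (i-1), hmem1⟩ := by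
    show G.Adj (v i) (v (i-1))
    have h := hadj (i-1)
    rw [sub_add_cancel] at h
    exact h.symm
  have hadj2 : (G.induce (Set.range v)).Adj ⟨v i, hvi⟩ ⟨v (i+1), hmem2⟩ := hadj i
  have hadj3 : (G.induce (Set.range v)).Adj ⟨v i, hvi⟩ ⟨w, hwr⟩ := haw
  let m := e.mapNeighborSet ⟨v i, hvi⟩
  let n1 : (G.induce (Set.range v)).neighborSet ⟨v i, hvi⟩ := ⟨⟨v (i-1), hmem1⟩, hadj1⟩
  let n2 : (G.induce (Set.range v)).neighborSet ⟨v i, hvi⟩ := ⟨⟨v (i+1), hmem2⟩, hadj2⟩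
  let n3 : (G.induce (Set.range v)).neighborSet ⟨v i, hvi⟩ := ⟨⟨w, hwr⟩, hadj3⟩
  have h12 : n1 ≠ n2 := by
    intro h
    have := congrArg (fun z => (z.1 : {x // x ∈ Set.range v}).1) h
    exact absurd (hinj this) (fin5_sub_ne_add i)
  have h13 : n1 ≠ n3 := by
    intro h
    have := congrArg (fun z => (z.1 : {x // x ∈ Set.range v}).1) h
    exact hw1 this.symm
  have h23 : n2 ≠ n3 := by
    intro h
    have := congrArg (fun z => (z.1 : {x // x ∈ Set.range v}).1) h
    exact hw2 this.symm
  have hm12 : m n1 ≠ m n2 := fun h => h12 (m.injective h)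
  have hm13 : m n1 ≠ m n3 := fun h => h13 (m.injective h)
  have hm23 : m n2 ≠ m n3 := fun h => h23 (m.injective h)
  have hmem : ∀ z : (G.induce (Set.range v)).neighborSet ⟨v i, hvi⟩,
      ((m z : Fin 5)) = e ⟨v i, hvi⟩ - 1 ∨ ((m z : Fin 5)) = e ⟨v i, hvi⟩ + 1 := by
    intro z
    have hz : (cycleGraph 5).Adj (e ⟨v i, hvi⟩) (m z : Fin 5) := (m z).2
    rw [cycleGraph_adj] at hz
    rcases hz with hz | hz
    · left
      calc (m z : Fin 5) = e ⟨v i, hvi⟩ - (e ⟨v i, hvi⟩ - (m z : Fin 5)) := by open Fin.CommRing in ring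
        _ = e ⟨v i, hvi⟩ - 1 := by rw [hz]
    · right
      calc (m z : Fin 5) = e ⟨v i, hvi⟩ + ((m z : Fin 5) - e ⟨v i, hvi⟩) := by open Fin.CommRing in ring
        _ = e ⟨v i, hvi⟩ + 1 := by rw [hz]
  have hv12 : (m n1 : Fin 5) ≠ (m n2 : Fin 5) := fun h => hm12 (Subtype.ext h)
  have hv13 : (m n1 : Fin 5) ≠ (m n3 : Fin 5) := fun h => hm13 (Subtype.ext h)
  have hv23 : (m n2 : Fin 5) ≠ (m n3 : Fin 5) := fun h => hm23 (Subtype.ext h)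
  rcases hmem n1 with h1 | h1 <;> rcases hmem n2 with h2 | h2 <;> rcases hmem n3 with h3 | h3 <;>
    first
      | exact hv12 (h1.trans h2.symm)
      | exact hv13 (h1.trans h3.symm)
      | exact hv23 (h2.trans h3.symm)

lemma no_ext_edge [DecidableEq V] (v : Fin 5 → V) (hinj : Function.Injective v)
    (hB : IsBlock G (Set.range v))
    (hncut : ∀ i : Fin 5, i ≠ 0 → (G.induce {y | y ≠ v i}).Connected)
    (i : Fin 5) (hi : i ≠ 0) {w : V} (hw : w ∉ Set.range v) : ¬ G.Adj (v i) w := by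
  intro haw
  have h0mem : (v 0 : V) ∈ {y | y ≠ v i} := fun h => hi (hinj h).symm
  have hwmem : w ∈ {y | y ≠ v i} := fun h => hw ⟨i, h.symm⟩
  obtain ⟨q, hqp, hqs⟩ := walk_in_set (hncut i hi) hwmem h0mem
  set T : Set V := Set.range v ∪ {y | y ∈ q.support} with hT
  have hsub : Set.range v ⊆ T := Set.subset_union_left
  have hTconn : (G.induce T).Connected := by
    apply induce_union_connected hB.1.1.preconnected (Walk.connected_induce_support q).preconnected
    exact ⟨v 0, ⟨0, rfl⟩, q.end_mem_support⟩
  have hrangene : ∀ x : V, (Set.range v \ {x}).Nonempty := by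
    intro x
    rcases eq_or_ne x (v 0) with rfl | hx
    · exact ⟨v 1, ⟨1, rfl⟩, fun h => absurd (hinj h) (by decide)⟩
    · exact ⟨v 0, ⟨0, rfl⟩, fun h => hx (Set.mem_singleton_iff.mp h).symm⟩
  have hRconn : ∀ x : V, (G.induce (Set.range v \ {x})).Connected := by
    intro x
    by_cases hx : x ∈ Set.range v
    · exact hB.1.2 x hx (hrangene x)
    · rw [Set.diff_singleton_eq_self hx]
      exact hB.1.1
  have hTcut : ∀ x ∈ T, (T \ {x}).Nonempty → (G.induce (T \ {x})).Connected := by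
    intro x _ _
    by_cases hxvi : x = v i
    · subst hxvi
      have hTd : T \ {v i} = (Set.range v \ {v i}) ∪ {y | y ∈ q.support} := by
        ext z
        simp only [hT, Set.mem_diff, Set.mem_union, Set.mem_setOf_eq, Set.mem_singleton_iff]
        constructor
        · rintro ⟨h1 | h1, h2⟩
          · exact Or.inl ⟨h1, h2⟩
          · exact Or.inr h1
        · rintro (⟨h1, h2⟩ | h1)
          · exact ⟨Or.inl h1, h2⟩
          · exact ⟨Or.inr h1, hqs z h1⟩
      rw [hTd]
      apply induce_union_connected (hRconn (v i)).preconnected (Walk.connected_induce_support q).preconnected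
      exact ⟨v 0, ⟨⟨0, rfl⟩, h0mem⟩, q.end_mem_support⟩
    · have hvimem : v i ∈ T \ {x} :=
        ⟨Or.inl ⟨i, rfl⟩, fun h => hxvi (Set.mem_singleton_iff.mp h).symm⟩
      apply G.induce_connected_of_patches (v i) hvimem
      intro y hy
      obtain ⟨hyT, hyx⟩ := hy
      have hyx' : y ≠ x := fun h => hyx (Set.mem_singleton_iff.mpr h)
      have hRsub : Set.range v \ {x} ⊆ T \ {x} := fun z hz => ⟨hsub hz.1, hz.2⟩
      rcases hyT with hyr | hyq
      · exact ⟨Set.range v \ {x}, hRsub,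
          ⟨⟨i, rfl⟩, fun h => hxvi (Set.mem_singleton_iff.mp h).symm⟩,
          ⟨hyr, hyx⟩, (hRconn x).preconnected _ _⟩
      · by_cases hxr : x ∈ (q.takeUntil y hyq).support
        · have hxd : x ∉ (q.dropUntil y hyq).support := fun h =>
            hyx' (eq_of_mem_takeUntil_dropUntil hqp hyq hxr h).symm
          have hx0 : x ≠ v 0 := by
            intro h
            subst h
            exact hyx' (eq_of_mem_takeUntil_dropUntil hqp hyq hxr
              (q.dropUntil y hyq).end_mem_support).symm
          refine ⟨(Set.range v \ {x}) ∪ {z | z ∈ (q.dropUntil y hyq).support}, ?_, ?_, ?_, ?_⟩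
          · rintro z (hz | hz)
            · exact hRsub hz
            · exact ⟨Or.inr (q.support_dropUntil_subset hyq hz),
                fun h => hxd ((Set.mem_singleton_iff.mp h) ▸ hz)⟩
          · exact Or.inl ⟨⟨i, rfl⟩, fun h => hxvi (Set.mem_singleton_iff.mp h).symm⟩
          · exact Or.inr (Walk.start_mem_support _)
          · have hc : (G.induce ((Set.range v \ {x}) ∪
                {z | z ∈ (q.dropUntil y hyq).support})).Connected := by
              apply induce_union_connected (hRconn x).preconnected (Walk.connected_induce_support _).preconnected
              exact ⟨v 0, ⟨⟨0, rfl⟩, fun h => hx0 (Set.mem_singleton_iff.mp h).symm⟩,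
                Walk.end_mem_support _⟩
            exact hc.preconnected _ _
        · refine ⟨(Set.range v \ {x}) ∪ {z | z ∈ (q.takeUntil y hyq).support}, ?_, ?_, ?_, ?_⟩
          · rintro z (hz | hz)
            · exact hRsub hz
            · exact ⟨Or.inr (q.support_takeUntil_subset hyq hz),
                fun h => hxr ((Set.mem_singleton_iff.mp h) ▸ hz)⟩
          · exact Or.inl ⟨⟨i, rfl⟩, fun h => hxvi (Set.mem_singleton_iff.mp h).symm⟩
          · exact Or.inr (Walk.end_mem_support _)
          · have hc : (G.induce ((Set.range v \ {x}) ∪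
                {z | z ∈ (q.takeUntil y hyq).support})).Connected := by
              apply connected_induce_union (hRconn x).preconnected (Walk.connected_induce_support _).preconnected
                (v := v i) (w := w)
                ⟨⟨i, rfl⟩, fun h => hxvi (Set.mem_singleton_iff.mp h).symm⟩
                (Walk.start_mem_support _) haw
            exact hc.preconnected _ _
  have hTeq : T = Set.range v := hB.2 T hsub ⟨hTconn, hTcut⟩
  apply hw
  rw [← hTeq]
  exact Or.inr q.start_mem_support

lemma nbr_ne (v : Fin 5 → V) (hinj : Function.Injective v) (φ : V → Fin 4)
    (hNS : ∀ i : Fin 5, i ≠ 0 → G.neighborSet (v i) = {v (i - 1), v (i + 1)})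
    (hodd : ∀ u : V, (G.neighborSet u).Nonempty → OddAt G φ u)
    (i : Fin 5) (hi : i ≠ 0) : φ (v (i - 1)) ≠ φ (v (i + 1)) := by
  intro hEq
  have hne : v (i - 1) ≠ v (i + 1) := fun h => fin5_sub_ne_add i (hinj h)
  have hnonempty : (G.neighborSet (v i)).Nonempty := by
    rw [hNS i hi]; exact ⟨v (i - 1), Or.inl rfl⟩
  obtain ⟨c, hc⟩ := hodd (v i) hnonempty
  have hcount : nbrCount G φ (v i) c = if c = φ (v (i - 1)) then 2 else 0 := by
    unfold nbrCount
    rw [hNS i hi]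
    by_cases hc' : c = φ (v (i - 1))
    · rw [if_pos hc']
      have hset : {u | u ∈ ({v (i - 1), v (i + 1)} : Set V) ∧ φ u = c}
          = {v (i - 1), v (i + 1)} := by
        ext u
        simp only [Set.mem_setOf_eq, Set.mem_insert_iff, Set.mem_singleton_iff]
        constructor
        · rintro ⟨h, _⟩; exact h
        · rintro (rfl | rfl)
          · exact ⟨Or.inl rfl, hc'.symm⟩
          · exact ⟨Or.inr rfl, by rw [← hEq]; exact hc'.symm⟩
      rw [hset, Set.ncard_pair hne]
    · rw [if_neg hc']
      have hset : {u | u ∈ ({v (i - 1), v (i + 1)} : Set V) ∧ φ u = c} = ∅ := by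
        ext u
        simp only [Set.mem_setOf_eq, Set.mem_insert_iff, Set.mem_singleton_iff,
          Set.mem_empty_iff_false, iff_false, not_and]
        rintro (rfl | rfl)
        · exact fun h => hc' h.symm
        · exact fun h => hc' (by rw [← h, hEq])
      rw [hset, Set.ncard_empty]
  rw [hcount] at hc
  split_ifs at hc <;> simp [Nat.odd_iff] at hc

end Auxiliary

theorem leaf_block_reduction {V : Type*} [Fintype V] (G : SimpleGraph V)
    (hconn : G.Connected)
    (hblocks : ∀ S : Set V, IsBlock G S → IsC5Block G S)
    (htwo : ∃ S T : Set V, IsBlock G S ∧ IsBlock G T ∧ S ≠ T)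
    (v : Fin 5 → V) (hinj : Function.Injective v)
    (hB : IsBlock G (Set.range v))
    (hadj : ∀ i : Fin 5, G.Adj (v i) (v (i + 1)))
    (hcut : ¬ (G.induce {y | y ≠ v 0}).Connected)
    (hncut : ∀ i : Fin 5, i ≠ 0 → (G.induce {y | y ≠ v i}).Connected)
    (φ : V → Fin 4) (hφ : IsOdd4Coloring G φ) :
    φ (v 1) = φ (v 4) ∧
    IsOdd4Coloring (G.induce {u | ∀ i : Fin 5, i ≠ 0 → u ≠ v i})
      (fun u => φ u.1) := by
  classical
  obtain ⟨hproper, hodd⟩ := hφ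
  have hC5 := hblocks (Set.range v) hB
  have hNS : ∀ i : Fin 5, i ≠ 0 → G.neighborSet (v i) = {v (i-1), v (i+1)} := by
    intro i hi
    ext y
    simp only [mem_neighborSet, Set.mem_insert_iff, Set.mem_singleton_iff]
    constructor
    · intro hy
      by_cases hyr : y ∈ Set.range v
      · exact chord_free v hinj hadj hC5 i hyr hy
      · exact absurd hy (no_ext_edge v hinj hB hncut i hi hyr)
    · rintro (rfl | rfl)
      · have h := hadj (i-1); rw [sub_add_cancel] at h; exact h.symm
      · exact hadj i
  have hnbrne : ∀ i : Fin 5, i ≠ 0 → φ (v (i - 1)) ≠ φ (v (i + 1)) :=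
    fun i hi => nbr_ne v hinj φ hNS hodd i hi
  have key : ∀ a b c d e : Fin 4, a ≠ b → b ≠ c → c ≠ d → d ≠ e → e ≠ a →
      a ≠ c → b ≠ d → c ≠ e → d ≠ a → b = e := by decide
  have hab : φ (v 0) ≠ φ (v 1) := by
    have h := hproper (hadj 0); rwa [show (0:Fin 5)+1 = 1 by decide] at h
  have hbc : φ (v 1) ≠ φ (v 2) := by
    have h := hproper (hadj 1); rwa [show (1:Fin 5)+1 = 2 by decide] at h
  have hcd : φ (v 2) ≠ φ (v 3) := by
    have h := hproper (hadj 2); rwa [show (2:Fin 5)+1 = 3 by decide] at h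
  have hde : φ (v 3) ≠ φ (v 4) := by
    have h := hproper (hadj 3); rwa [show (3:Fin 5)+1 = 4 by decide] at h
  have hea : φ (v 4) ≠ φ (v 0) := by
    have h := hproper (hadj 4); rwa [show (4:Fin 5)+1 = 0 by decide] at h
  have h02 : φ (v 0) ≠ φ (v 2) := by
    have h := hnbrne 1 (by decide)
    rwa [show (1:Fin 5)-1 = 0 by decide, show (1:Fin 5)+1 = 2 by decide] at h
  have h13 : φ (v 1) ≠ φ (v 3) := by
    have h := hnbrne 2 (by decide)
    rwa [show (2:Fin 5)-1 = 1 by decide, show (2:Fin 5)+1 = 3 by decide] at h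
  have h24 : φ (v 2) ≠ φ (v 4) := by
    have h := hnbrne 3 (by decide)
    rwa [show (3:Fin 5)-1 = 2 by decide, show (3:Fin 5)+1 = 4 by decide] at h
  have h30 : φ (v 3) ≠ φ (v 0) := by
    have h := hnbrne 4 (by decide)
    rwa [show (4:Fin 5)-1 = 3 by decide, show (4:Fin 5)+1 = 0 by decide] at h
  have part1 : φ (v 1) = φ (v 4) :=
    key (φ (v 0)) (φ (v 1)) (φ (v 2)) (φ (v 3)) (φ (v 4))
      hab hbc hcd hde hea h02 h13 h24 h30
  refine ⟨part1, ?_, ?_⟩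
  · intro x y hxy
    exact hproper hxy
  · rintro ⟨u, hu⟩ ⟨⟨w', hw'S⟩, hw'adj⟩
    have hGadj : G.Adj u w' := hw'adj
    set S' : Set V := {u | ∀ i : Fin 5, i ≠ 0 → u ≠ v i} with hS'
    have himg : ∀ c : Fin 4, nbrCount (G.induce S') (fun x => φ x.1) ⟨u, hu⟩ c
        = ({y | y ∈ G.neighborSet u ∧ φ y = c} ∩ S').ncard := by
      intro c
      unfold nbrCount
      rw [← Set.ncard_image_of_injective _ (Subtype.val_injective (p := fun y => y ∈ S'))]
      congr 1
      ext y
      constructor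
      · rintro ⟨⟨z, hzS⟩, ⟨hzadj, hzc⟩, rfl⟩
        exact ⟨⟨hzadj, hzc⟩, hzS⟩
      · rintro ⟨⟨hyadj, hyc⟩, hyS⟩
        exact ⟨⟨y, hyS⟩, ⟨hyadj, hyc⟩, rfl⟩
    by_cases hur : u ∈ Set.range v
    · obtain ⟨j, rfl⟩ := hur
      have hj : j = 0 := by
        by_contra hj
        exact hu j hj rfl
      subst hj
      have hv1adj : G.Adj (v 0) (v 1) := by
        have h := hadj 0; rwa [show (0:Fin 5)+1 = 1 by decide] at h
      have hv4adj : G.Adj (v 0) (v 4) := by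
        have h := hadj 4; rw [show (4:Fin 5)+1 = 0 by decide] at h; exact h.symm
      have hne14 : v 1 ≠ v 4 := fun h => absurd (hinj h) (by decide)
      have hinter : ∀ c : Fin 4, {y | y ∈ G.neighborSet (v 0) ∧ φ y = c} ∩ S'
          = {y | y ∈ G.neighborSet (v 0) ∧ φ y = c} \ {v 1, v 4} := by
        intro c
        ext y
        constructor
        · rintro ⟨hy, hyS⟩
          refine ⟨hy, fun h => ?_⟩
          rcases h with rfl | rfl
          · exact hyS 1 (by decide) rfl
          · exact hyS 4 (by decide) rfl
        · rintro ⟨hy, hy14⟩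
          refine ⟨hy, fun k hk hyk => ?_⟩
          subst hyk
          have hv0nbr : v 0 ∈ G.neighborSet (v k) := hy.1.symm
          rw [hNS k hk] at hv0nbr
          rcases hv0nbr with h | h
          · have h0 := hinj h
            have hk1 : k = 1 := by
              calc k = (k - 1) + 1 := by open Fin.CommRing in ring
                _ = 0 + 1 := by rw [← h0]
                _ = 1 := by decide
            exact hy14 (Or.inl (by rw [hk1]))
          · have h0 := hinj h
            have hk4 : k = 4 := by
              calc k = (k + 1) - 1 := by open Fin.CommRing in ring
                _ = 0 - 1 := by rw [← h0]
                _ = 4 := by decide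
            exact hy14 (Or.inr (by rw [hk4]; rfl))
      obtain ⟨c, hc⟩ := hodd (v 0) ⟨v 1, hv1adj⟩
      have hc' : Odd ({y | y ∈ G.neighborSet (v 0) ∧ φ y = c}.ncard) := hc
      refine ⟨c, ?_⟩
      rw [himg c, hinter c]
      by_cases hcEq : c = φ (v 1)
      · have hsub14 : ({v 1, v 4} : Set V) ⊆ {y | y ∈ G.neighborSet (v 0) ∧ φ y = c} := by
          rintro y (rfl | rfl)
          · exact ⟨hv1adj, hcEq.symm⟩
          · exact ⟨hv4adj, by rw [← part1, ← hcEq]⟩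
        rw [Set.ncard_diff hsub14 (Set.toFinite _)]
        have h2 : ({v 1, v 4} : Set V).ncard = 2 := Set.ncard_pair hne14
        have hge : 2 ≤ {y | y ∈ G.neighborSet (v 0) ∧ φ y = c}.ncard := by
          rw [← h2]
          exact Set.ncard_le_ncard hsub14 (Set.toFinite _)
        rw [h2]
        obtain ⟨k, hk⟩ := hc'
        exact ⟨k - 1, by omega⟩
      · have hdiff : {y | y ∈ G.neighborSet (v 0) ∧ φ y = c} \ ({v 1, v 4} : Set V)
            = {y | y ∈ G.neighborSet (v 0) ∧ φ y = c} := by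
          ext y
          constructor
          · rintro ⟨hy, _⟩; exact hy
          · rintro hy
            refine ⟨hy, fun h => ?_⟩
            rcases h with rfl | rfl
            · exact hcEq hy.2.symm
            · exact hcEq (by rw [← hy.2, ← part1])
        rw [hdiff]
        exact hc'
    · have hinter : ∀ c : Fin 4, {y | y ∈ G.neighborSet u ∧ φ y = c} ∩ S'
          = {y | y ∈ G.neighborSet u ∧ φ y = c} := by
        intro c
        apply Set.inter_eq_self_of_subset_left
        rintro y ⟨hy, _⟩ k hk hyk
        subst hyk
        have hunbr : u ∈ G.neighborSet (v k) := hy.symm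
        rw [hNS k hk] at hunbr
        rcases hunbr with h | h
        · exact hur ⟨_, h.symm⟩
        · exact hur ⟨_, h.symm⟩
      obtain ⟨c, hc⟩ := hodd u ⟨w', hGadj⟩
      refine ⟨c, ?_⟩
      rw [himg c, hinter c]
      exact hc
end
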